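/- arXiv:1910.05718 — 3 statements merged into one kernel-verified Lean document; each statement's English description precedes it below -/
import Mathlib

section
/- Let $p$ be a prime, $L \ge 2$, and $r \ge 4(L-1)$. Every matrix $A \in \mathrm{SL}_2(\mathbb{Z}/p^r\mathbb{Z})$ with $A \equiv I \pmod{p^{4(L-1)}}$ can be written as a product $\begin{pmatrix}1 & x \\ 0 & 1\end{pmatrix}\begin{pmatrix}1 & 0 \\ y & 1\end{pmatrix}\begin{pmatrix}1 & z \\ 0 & 1\end{pmatrix}\begin{pmatrix}1 & 0 \\ w & 1\end{pmatrix}$ with $x, y, z, w \in \mathbb{Z}/p^r\mathbb{Z}$ all divisible by $p^{2(L-1)}$. -/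
open Matrix

/-!
Put `q = p ^ (2 (L - 1))`, which is nilpotent in `ℤ/p^rℤ`. Since `A ≡ I mod q²`, the corner
`d = A₁₁ = 1 + q·(qδ)` is a unit, and a product of elementary matrices
`[1 x; 0 1] [1 0; y 1] [1 z; 0 1] [1 0; w 1]` has lower right entry `1 + yz`. Taking `y = q`,
`z = qδ` fixes that entry; the off-diagonal entries then determine `x` and `w` by dividing
by `d`, and `det A = 1` takes care of the remaining entry.
-/

theorem Matrix.eq_upper_mul_lower_mul_upper_mul_lower {R : Type*} [CommRing R]
    {a b c d e y z : R} (hdet : a * d - b * c = 1) (hd : 1 + y * z = d) (he : d * e = 1) :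
    !![a, b; c, d] =
      !![1, (b - z) * e; 0, 1] * !![1, 0; y, 1] * !![1, z; 0, 1] * !![1, 0; (c - y) * e, 1] := by
  subst hd
  simp only [mul_fin_two, EmbeddingLike.apply_eq_iff_eq, vecCons_inj, and_true]
  refine ⟨⟨?_, ?_⟩, ?_, ?_⟩
  · linear_combination (1 - y * z * e) * hdet + (a * y * z - b * c - (c - y) * (b - z) * e) * he
  · linear_combination (z - b) * he
  · linear_combination (y - c) * he
  · ring

theorem Matrix.SpecialLinearGroup.exists_eq_upper_mul_lower_mul_upper_mul_lower
    {R : Type*} [CommRing R] {q : R} (hq : IsNilpotent q) (A : SpecialLinearGroup (Fin 2) R)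
    (hA : ∀ i j,
      q * q ∣ (A : Matrix (Fin 2) (Fin 2) R) i j - (1 : Matrix (Fin 2) (Fin 2) R) i j) :
    ∃ x y z w : R, q ∣ x ∧ q ∣ y ∧ q ∣ z ∧ q ∣ w ∧
      (A : Matrix (Fin 2) (Fin 2) R) =
        !![1, x; 0, 1] * !![1, 0; y, 1] * !![1, z; 0, 1] * !![1, 0; w, 1] := by
  obtain ⟨δ, hδ⟩ := hA 1 1
  have hb : q ∣ A 0 1 := by simpa using (dvd_mul_right q q).trans (hA 0 1)
  have hc : q ∣ A 1 0 := by simpa using (dvd_mul_right q q).trans (hA 1 0)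
  have hd : 1 + q * (q * δ) = A 1 1 := by
    simp only [one_apply_eq] at hδ
    linear_combination -hδ
  obtain ⟨u, hu⟩ : IsUnit (A 1 1) :=
    hd ▸ ((Commute.all _ _).isNilpotent_mul_right hq).isUnit_one_add
  refine ⟨(A 0 1 - q * δ) * u⁻¹, q, q * δ, (A 1 0 - q) * u⁻¹,
    ((hb.sub (dvd_mul_right q δ)).mul_right _), dvd_rfl, dvd_mul_right q δ,
    ((hc.sub dvd_rfl).mul_right _), ?_⟩
  have hdet : A 0 0 * A 1 1 - A 0 1 * A 1 0 = 1 := by rw [← det_fin_two]; exact A.det_coe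
  rw [eta_fin_two (A : Matrix (Fin 2) (Fin 2) R)]
  exact eq_upper_mul_lower_mul_upper_mul_lower hdet hd (by rw [← hu, Units.mul_inv])

theorem sl2_congruence_decomposition_general (p r L : ℕ) (hL : 2 ≤ L)
    (A : Matrix.SpecialLinearGroup (Fin 2) (ZMod (p ^ r)))
    (hA : ∀ i j, (p : ZMod (p ^ r)) ^ (4 * (L - 1)) ∣
      ((A : Matrix (Fin 2) (Fin 2) (ZMod (p ^ r))) i j - (1 : Matrix (Fin 2) (Fin 2) (ZMod (p ^ r))) i j)) :
    ∃ x y z w : ZMod (p ^ r),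
      (p : ZMod (p ^ r)) ^ (2 * (L - 1)) ∣ x ∧
      (p : ZMod (p ^ r)) ^ (2 * (L - 1)) ∣ y ∧
      (p : ZMod (p ^ r)) ^ (2 * (L - 1)) ∣ z ∧
      (p : ZMod (p ^ r)) ^ (2 * (L - 1)) ∣ w ∧
      (A : Matrix (Fin 2) (Fin 2) (ZMod (p ^ r)))
        = !![1, x; 0, 1] * !![1, 0; y, 1] * !![1, z; 0, 1] * !![1, 0; w, 1] := by
  have hp : IsNilpotent (p : ZMod (p ^ r)) := ⟨r, by rw [← Nat.cast_pow, ZMod.natCast_self]⟩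
  refine SpecialLinearGroup.exists_eq_upper_mul_lower_mul_upper_mul_lower
    (hp.pow_of_pos (by omega)) A fun i j => ?_
  rw [← pow_add, ← two_mul, ← mul_assoc]
  exact hA i j

/-- an element of `SL₂(ℤ/p^rℤ)` congruent to `I` mod `p^{4(L-1)}`
is a product of four elementary matrices with off-diagonal entries divisible
by `p^{2(L-1)}`. -/
theorem sl2_congruence_decomposition (p r L : ℕ) (hp : p.Prime) (hL : 2 ≤ L)
    (hr : 4 * (L - 1) ≤ r)
    (A : Matrix.SpecialLinearGroup (Fin 2) (ZMod (p ^ r)))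
    (hA : ∀ i j, (p : ZMod (p ^ r)) ^ (4 * (L - 1)) ∣
      ((A : Matrix (Fin 2) (Fin 2) (ZMod (p ^ r))) i j - (1 : Matrix (Fin 2) (Fin 2) (ZMod (p ^ r))) i j)) :
    ∃ x y z w : ZMod (p ^ r),
      (p : ZMod (p ^ r)) ^ (2 * (L - 1)) ∣ x ∧
      (p : ZMod (p ^ r)) ^ (2 * (L - 1)) ∣ y ∧
      (p : ZMod (p ^ r)) ^ (2 * (L - 1)) ∣ z ∧
      (p : ZMod (p ^ r)) ^ (2 * (L - 1)) ∣ w ∧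
      (A : Matrix (Fin 2) (Fin 2) (ZMod (p ^ r)))
        = !![1, x; 0, 1] * !![1, 0; y, 1] * !![1, z; 0, 1] * !![1, 0; w, 1] :=
  sl2_congruence_decomposition_general p r L hL A hA
end

section
/- Let $p$ be a prime, $r \ge 1$, $L \ge 2$, and let $g_1 \in \mathrm{SL}_d(\mathbb{Z}/p^r\mathbb{Z})$ be a lower triangular matrix with diagonal entries $\lambda_1, \dots, \lambda_d$ that are units and pairwise distinct modulo $p^L$, and with all strictly lower triangular entries $b_{jk}$ satisfying $\mathrm{ord}_p(b_{jk}) = L-1$. Then for every lower triangular matrix $g_2' \in \mathrm{SL}_d(\mathbb{Z}/p^r\mathbb{Z})$ with the same diagonal $\lambda_1, \dots, \lambda_d$ and strictly lower triangular entries $c'_{jk}$ satisfying $c'_{jk} \equiv b_{jk} \pmod{p^{2(L-1)}}$, there exists a lower unitriangular matrix $y$ with strictly lower triangular entries divisible by $p^{L-1}$ such that $y g_1 y^{-1} = g_2'$ in $\mathrm{SL}_d(\mathbb{Z}/p^r\mathbb{Z})$. -/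
open Matrix

open Matrix Finset

open scoped Classical in
noncomputable def yAux {d : ℕ} {R : Type*} [CommRing R] (lam : Fin d → R) (pw : R)
    (A B : Matrix (Fin d) (Fin d) R) (j k : Fin d) : R :=
  if j = k then 1
  else if hk : k < j then
    (if hex : ∃ z, pw ∣ z ∧ (lam k - lam j) * z =
        (B j k - A j k) + ∑ m ∈ (Finset.Ioo k j).attach,
          (B j m.1 * yAux lam pw A B m.1 k - yAux lam pw A B j m.1 * A m.1 k)
      then hex.choose else 0)
  else 0
termination_by (j.val - k.val)
decreasing_by
  all_goals
    have h1 := Finset.mem_Ioo.mp m.2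
    simp only [Fin.lt_def] at h1 hk
    omega

variable {d : ℕ} {R : Type*} [CommRing R]

lemma yAux_diag (lam : Fin d → R) (pw : R) (A B : Matrix (Fin d) (Fin d) R) (j : Fin d) :
    yAux lam pw A B j j = 1 := by
  rw [yAux]; simp

lemma yAux_upper (lam : Fin d → R) (pw : R) (A B : Matrix (Fin d) (Fin d) R)
    {j k : Fin d} (h : j < k) : yAux lam pw A B j k = 0 := by
  rw [yAux]
  rw [if_neg (by exact fun e => absurd e (by rintro rfl; exact lt_irrefl _ h)),
    dif_neg (by exact fun h2 => absurd h (not_lt.mpr h2.le))]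

lemma yAux_spec (lam : Fin d → R) (pw : R) (A B : Matrix (Fin d) (Fin d) R)
    (hsolv : ∀ j k : Fin d, k < j → ∀ X : R, pw * pw ∣ X →
      ∃ z, pw ∣ z ∧ (lam k - lam j) * z = X)
    (hA : ∀ j k : Fin d, k < j → pw ∣ A j k)
    (hBA : ∀ j k : Fin d, k < j → pw * pw ∣ (B j k - A j k)) :
    ∀ n : ℕ, ∀ j k : Fin d, k < j → j.val - k.val ≤ n →
      pw ∣ yAux lam pw A B j k ∧ (lam k - lam j) * yAux lam pw A B j k =
        (B j k - A j k) + ∑ m ∈ (Finset.Ioo k j).attach,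
          (B j m.1 * yAux lam pw A B m.1 k - yAux lam pw A B j m.1 * A m.1 k) := by
  intro n
  induction n with
  | zero =>
    intro j k hkj hle
    exfalso
    have := Fin.lt_def.mp hkj
    omega
  | succ n ih =>
    intro j k hkj hle
    have hX : pw * pw ∣ (B j k - A j k) + ∑ m ∈ (Finset.Ioo k j).attach,
        (B j m.1 * yAux lam pw A B m.1 k - yAux lam pw A B j m.1 * A m.1 k) := by
      refine dvd_add (hBA j k hkj) (Finset.dvd_sum ?_)
      rintro ⟨m, hm⟩ -
      have hm' := Finset.mem_Ioo.mp hm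
      have hkm : k < m := hm'.1
      have hmj : m < j := hm'.2
      have hd1 : m.val - k.val ≤ n := by
        have := Fin.lt_def.mp hkj; have := Fin.lt_def.mp hkm; have := Fin.lt_def.mp hmj
        omega
      have hd2 : j.val - m.val ≤ n := by
        have := Fin.lt_def.mp hkj; have := Fin.lt_def.mp hkm; have := Fin.lt_def.mp hmj
        omega
      have h1 := (ih m k hkm hd1).1
      have h2 := (ih j m hmj hd2).1
      have hBjm : pw ∣ B j m := by
        have : B j m = A j m + (B j m - A j m) := by ring
        rw [this]
        exact dvd_add (hA j m hmj) ((dvd_mul_left pw pw).trans (hBA j m hmj))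
      exact dvd_sub (mul_dvd_mul hBjm h1) (mul_dvd_mul h2 (hA m k hkm))
    obtain ⟨z, hz1, hz2⟩ := hsolv j k hkj _ hX
    have hex : ∃ z, pw ∣ z ∧ (lam k - lam j) * z =
        (B j k - A j k) + ∑ m ∈ (Finset.Ioo k j).attach,
          (B j m.1 * yAux lam pw A B m.1 k - yAux lam pw A B j m.1 * A m.1 k) :=
      ⟨z, hz1, hz2⟩
    have hne : ¬ j = k := by rintro rfl; exact lt_irrefl _ hkj
    have heq : yAux lam pw A B j k = hex.choose := by
      conv_lhs => rw [yAux]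
      rw [if_neg hne, dif_pos hkj, dif_pos hex]
    rw [heq]
    exact hex.choose_spec

lemma zmod_unit_decomp (p r L : ℕ) (hp : p.Prime) (hr : 1 ≤ r)
    (x : ZMod (p ^ r)) (hx : ¬ ((p : ZMod (p ^ r)) ^ L ∣ x)) :
    ∃ s : ℕ, ∃ u : ZMod (p ^ r), s < L ∧ IsUnit u ∧ x = (p : ZMod (p ^ r)) ^ s * u := by
  haveI : NeZero (p ^ r) := ⟨pow_ne_zero r hp.ne_zero⟩
  set a := x.val with ha
  have hcast : ((a : ℕ) : ZMod (p ^ r)) = x := ZMod.natCast_rightInverse x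
  have ha0 : a ≠ 0 := by
    intro h
    apply hx
    have : x = 0 := by rw [← hcast, h, Nat.cast_zero]
    rw [this]
    exact dvd_zero _
  set s := a.factorization p with hs
  set b := a / p ^ s with hb
  have hab : p ^ s * b = a := Nat.ordProj_mul_ordCompl_eq_self a p
  have hnb : ¬ p ∣ b := Nat.not_dvd_ordCompl hp ha0
  have hsL : s < L := by
    by_contra h
    push_neg at h
    apply hx
    have : (p : ℕ) ^ L ∣ a := dvd_trans (pow_dvd_pow p h) (Nat.ordProj_dvd a p)
    obtain ⟨c, hc⟩ := this
    refine ⟨(c : ZMod (p ^ r)), ?_⟩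
    rw [← hcast, hc]
    push_cast
    ring
  refine ⟨s, (b : ZMod (p ^ r)), hsL, ?_, ?_⟩
  · exact (ZMod.isUnit_iff_coprime b (p ^ r)).mpr
      (Nat.Coprime.pow_right r ((hp.coprime_iff_not_dvd.mpr hnb).symm))
  · rw [← hcast, ← hab]
    push_cast
    ring

lemma zmod_solv (p r L : ℕ) (hp : p.Prime) (hr : 1 ≤ r) (hL : 2 ≤ L)
    (x : ZMod (p ^ r)) (hx : ¬ ((p : ZMod (p ^ r)) ^ L ∣ x)) (X : ZMod (p ^ r))
    (hX : (p : ZMod (p ^ r)) ^ (L - 1) * (p : ZMod (p ^ r)) ^ (L - 1) ∣ X) :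
    ∃ z, (p : ZMod (p ^ r)) ^ (L - 1) ∣ z ∧ x * z = X := by
  obtain ⟨s, u, hsL, hu, hxu⟩ := zmod_unit_decomp p r L hp hr x hx
  obtain ⟨w, hw⟩ := hX
  set q : ZMod (p ^ r) := (p : ZMod (p ^ r))
  refine ⟨(hu.unit⁻¹ : (ZMod (p ^ r))ˣ) * (q ^ ((L - 1) + (L - 1) - s) * w), ?_, ?_⟩
  · refine Dvd.dvd.mul_left ?_ _
    exact Dvd.dvd.mul_right (pow_dvd_pow q (by omega)) w
  · rw [hxu, hw]
    have : q ^ s * (q ^ ((L - 1) + (L - 1) - s)) = q ^ (L - 1) * q ^ (L - 1) := by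
      rw [← pow_add, ← pow_add]
      congr 1
      omega
    calc q ^ s * u * (↑hu.unit⁻¹ * (q ^ ((L - 1) + (L - 1) - s) * w))
        = (u * ↑hu.unit⁻¹) * (q ^ s * q ^ ((L - 1) + (L - 1) - s) * w) := by ring
      _ = q ^ (L - 1) * q ^ (L - 1) * w := by rw [hu.mul_val_inv, this, one_mul]

/-- conjugating a lower triangular matrix with fixed diagonal to
any lower triangular matrix with the same diagonal and congruent lower entries,
by a lower unitriangular matrix with entries divisible by `p^{L-1}`. -/
theorem conjugate_lower_triangular (p r L d : ℕ) (hp : p.Prime) (hr : 1 ≤ r)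
    (hL : 2 ≤ L)
    (g₁ g₂ : Matrix.SpecialLinearGroup (Fin d) (ZMod (p ^ r)))
    (lam : Fin d → ZMod (p ^ r))
    (hunit : ∀ i, IsUnit (lam i))
    (hdist : ∀ i j : Fin d, i ≠ j → ¬ ((p : ZMod (p ^ r)) ^ L ∣ (lam i - lam j)))
    (hg₁diag : ∀ i, (g₁ : Matrix (Fin d) (Fin d) (ZMod (p ^ r))) i i = lam i)
    (hg₁upper : ∀ j k : Fin d, j < k →
      (g₁ : Matrix (Fin d) (Fin d) (ZMod (p ^ r))) j k = 0)
    (hg₁lower : ∀ j k : Fin d, k < j →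
      (p : ZMod (p ^ r)) ^ (L - 1) ∣ (g₁ : Matrix (Fin d) (Fin d) (ZMod (p ^ r))) j k ∧
      ¬ ((p : ZMod (p ^ r)) ^ L ∣ (g₁ : Matrix (Fin d) (Fin d) (ZMod (p ^ r))) j k))
    (hg₂diag : ∀ i, (g₂ : Matrix (Fin d) (Fin d) (ZMod (p ^ r))) i i = lam i)
    (hg₂upper : ∀ j k : Fin d, j < k →
      (g₂ : Matrix (Fin d) (Fin d) (ZMod (p ^ r))) j k = 0)
    (hg₂lower : ∀ j k : Fin d, k < j →
      (p : ZMod (p ^ r)) ^ (2 * (L - 1)) ∣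
        ((g₂ : Matrix (Fin d) (Fin d) (ZMod (p ^ r))) j k
          - (g₁ : Matrix (Fin d) (Fin d) (ZMod (p ^ r))) j k)) :
    ∃ y : Matrix.SpecialLinearGroup (Fin d) (ZMod (p ^ r)),
      (∀ i, (y : Matrix (Fin d) (Fin d) (ZMod (p ^ r))) i i = 1) ∧
      (∀ j k : Fin d, j < k → (y : Matrix (Fin d) (Fin d) (ZMod (p ^ r))) j k = 0) ∧
      (∀ j k : Fin d, k < j →
        (p : ZMod (p ^ r)) ^ (L - 1) ∣ (y : Matrix (Fin d) (Fin d) (ZMod (p ^ r))) j k) ∧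
      y * g₁ * y⁻¹ = g₂ := by
  set pw : ZMod (p ^ r) := (p : ZMod (p ^ r)) ^ (L - 1) with hpw
  set A : Matrix (Fin d) (Fin d) (ZMod (p ^ r)) := (g₁ : Matrix (Fin d) (Fin d) (ZMod (p ^ r))) with hA'
  set B : Matrix (Fin d) (Fin d) (ZMod (p ^ r)) := (g₂ : Matrix (Fin d) (Fin d) (ZMod (p ^ r))) with hB'
  have hpw2 : pw * pw = (p : ZMod (p ^ r)) ^ (2 * (L - 1)) := by
    rw [hpw, ← pow_add, two_mul]
  have hsolv : ∀ j k : Fin d, k < j → ∀ X : ZMod (p ^ r), pw * pw ∣ X →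
      ∃ z, pw ∣ z ∧ (lam k - lam j) * z = X := by
    intro j k hkj X hX
    exact zmod_solv p r L hp hr hL (lam k - lam j) (hdist k j hkj.ne) X hX
  have hAlow : ∀ j k : Fin d, k < j → pw ∣ A j k := fun j k h => (hg₁lower j k h).1
  have hBAlow : ∀ j k : Fin d, k < j → pw * pw ∣ (B j k - A j k) := by
    intro j k h
    rw [hpw2]
    exact hg₂lower j k h
  have spec := yAux_spec lam pw A B hsolv hAlow hBAlow d
  have hspec : ∀ j k : Fin d, k < j →
      pw ∣ yAux lam pw A B j k ∧ (lam k - lam j) * yAux lam pw A B j k =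
        (B j k - A j k) + ∑ m ∈ (Finset.Ioo k j).attach,
          (B j m.1 * yAux lam pw A B m.1 k - yAux lam pw A B j m.1 * A m.1 k) := by
    intro j k h
    exact spec j k h (by have := j.isLt; omega)
  set Y : Matrix (Fin d) (Fin d) (ZMod (p ^ r)) := Matrix.of (yAux lam pw A B) with hY
  have hYapp : ∀ j k, Y j k = yAux lam pw A B j k := fun _ _ => rfl
  have hYdiag : ∀ i, Y i i = 1 := fun i => yAux_diag lam pw A B i
  have hYupper : ∀ j k : Fin d, j < k → Y j k = 0 := fun j k h => yAux_upper lam pw A B h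
  have hdet : Y.det = 1 := by
    rw [Matrix.det_of_lowerTriangular Y (by intro i j h; exact hYupper i j h)]
    simp [hYdiag]
  set y : Matrix.SpecialLinearGroup (Fin d) (ZMod (p ^ r)) := ⟨Y, hdet⟩ with hy
  have reduce : ∀ (M N : Matrix (Fin d) (Fin d) (ZMod (p ^ r))),
      (∀ a b : Fin d, a < b → M a b = 0) → (∀ a b : Fin d, a < b → N a b = 0) →
      ∀ j k : Fin d, k < j → ∑ m, M j m * N m k =
        M j k * N k k + (M j j * N j k + ∑ m ∈ Finset.Ioo k j, M j m * N m k) := by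
    intro M N hM hN j k hkj
    have h1 : ∑ m, M j m * N m k = ∑ m ∈ Finset.Icc k j, M j m * N m k := by
      refine (Finset.sum_subset (Finset.subset_univ _) ?_).symm
      intro m _ hm
      rw [Finset.mem_Icc] at hm
      push_neg at hm
      rcases lt_or_ge m k with h | h
      · rw [hN m k h, mul_zero]
      · have hjm : j < m := lt_of_not_ge (fun hh => absurd hh (not_le.mpr (hm h)))
        rw [hM j m hjm, zero_mul]
    rw [h1, ← Finset.add_sum_erase _ _ (Finset.mem_Icc.mpr ⟨le_refl k, hkj.le⟩),
      Finset.Icc_erase_left,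
      ← Finset.add_sum_erase _ _ (Finset.mem_Ioc.mpr ⟨hkj, le_refl j⟩),
      Finset.Ioc_erase_right]
  have claim : Y * A = B * Y := by
    ext j k
    rw [Matrix.mul_apply, Matrix.mul_apply]
    rcases lt_trichotomy j k with h | h | h
    · rw [Finset.sum_eq_zero, Finset.sum_eq_zero]
      · intro m _
        rcases le_or_gt m j with hm | hm
        · rw [hYapp m k, yAux_upper lam pw A B (lt_of_le_of_lt hm h), mul_zero]
        · rw [hg₂upper j m hm, zero_mul]
      · intro m _
        rcases le_or_gt m j with hm | hm
        · rw [hg₁upper m k (lt_of_le_of_lt hm h), mul_zero]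
        · rw [hYapp j m, yAux_upper lam pw A B hm, zero_mul]
    · subst h
      rw [Finset.sum_eq_single j, Finset.sum_eq_single j]
      · rw [hYdiag j, hg₁diag j, hg₂diag j, one_mul, mul_one]
      · intro m _ hm
        rcases lt_or_gt_of_ne hm with hm' | hm'
        · rw [hYapp m j, yAux_upper lam pw A B hm', mul_zero]
        · rw [hg₂upper j m hm', zero_mul]
      · intro habs; exact absurd (Finset.mem_univ j) habs
      · intro m _ hm
        rcases lt_or_gt_of_ne hm with hm' | hm'
        · rw [hg₁upper m j hm', mul_zero]
        · rw [hYapp j m, yAux_upper lam pw A B hm', zero_mul]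
      · intro habs; exact absurd (Finset.mem_univ j) habs
    · rw [reduce Y A hYupper hg₁upper j k h, reduce B Y hg₂upper hYupper j k h]
      have hs := (hspec j k h).2
      rw [Finset.sum_attach (Finset.Ioo k j)
        (fun m => B j m * yAux lam pw A B m k - yAux lam pw A B j m * A m k),
        Finset.sum_sub_distrib] at hs
      rw [hYdiag j, hYdiag k, hg₁diag k, hg₂diag j, one_mul, mul_one]
      simp only [hYapp]
      linear_combination hs
  have hmul : y * g₁ = g₂ * y := by
    apply Subtype.ext
    rw [Matrix.SpecialLinearGroup.coe_mul, Matrix.SpecialLinearGroup.coe_mul]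
    exact claim
  refine ⟨y, hYdiag, hYupper, fun j k h => (hspec j k h).1, ?_⟩
  rw [hmul, mul_assoc, mul_inv_cancel, mul_one]
end

section
/- Let $p$ be a prime, $r \ge 1$, and suppose $\gamma \in \mathrm{SL}_d(\mathbb{Z}/p^r\mathbb{Z})$ has the property that all its diagonal entries are units. If moreover $\gamma \equiv I \pmod{p^m}$ for some $m \ge 1$, then $\gamma$ can be written as $N \cdot H \cdot U$ where $N$ is lower unitriangular with strictly lower entries divisible by $p^m$, $H$ is diagonal with diagonal entries $\equiv 1 \pmod{p^m}$, and $U$ is upper unitriangular with strictly upper entries divisible by $p^m$. -/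
/-!
Reduce modulo the ideal `(p ^ m)`, which lies in the Jacobson radical of `ZMod (p ^ r)` because
`p ^ m` is nilpotent. A matrix `γ ≡ 1` has a unit pivot `a = γ 0 0`, and
`!![a, r; c, M] = !![1, 0; a⁻¹ c, 1] * !![a, 0; 0, M - a⁻¹ c r] * !![1, a⁻¹ r; 0, 1]`.
Since `c ≡ 0`, the Schur complement `M - a⁻¹ c r` is again `≡ 1`, so induction on the size
factors it, and all three factors of `γ` are `≡ 1`.
-/

open Matrix

namespace Matrix

section Unitriangular

variable {ι R : Type*} [Preorder ι] [Zero R] [One R]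

def IsLowerUnitriangular (N : Matrix ι ι R) : Prop :=
  N.BlockTriangular OrderDual.toDual ∧ ∀ i, N i i = 1

def IsUpperUnitriangular (U : Matrix ι ι R) : Prop :=
  U.BlockTriangular id ∧ ∀ i, U i i = 1

theorem isLowerUnitriangular_one [DecidableEq ι] :
    (1 : Matrix ι ι R).IsLowerUnitriangular :=
  ⟨blockTriangular_one, one_apply_eq⟩

theorem isUpperUnitriangular_one [DecidableEq ι] :
    (1 : Matrix ι ι R).IsUpperUnitriangular :=
  ⟨blockTriangular_one, one_apply_eq⟩

end Unitriangular

section Border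

variable {R : Type*} {n : ℕ}

/-- The block matrix `!![a, r; c, M]` of size `n + 1`. -/
def border (a : R) (c r : Fin n → R) (M : Matrix (Fin n) (Fin n) R) :
    Matrix (Fin (n + 1)) (Fin (n + 1)) R :=
  of (Fin.cons (Fin.cons a r) fun i => Fin.cons (c i) (M i))

variable {a : R} {c r : Fin n → R} {M : Matrix (Fin n) (Fin n) R}

@[simp]
theorem border_zero_zero : border a c r M 0 0 = a := rfl

@[simp]
theorem border_zero_succ (j : Fin n) : border a c r M 0 j.succ = r j := rfl

@[simp]
theorem border_succ_zero (i : Fin n) : border a c r M i.succ 0 = c i := rfl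

@[simp]
theorem border_succ_succ (i j : Fin n) : border a c r M i.succ j.succ = M i j := rfl

theorem eq_border (A : Matrix (Fin (n + 1)) (Fin (n + 1)) R) :
    A = border (A 0 0) (fun i => A i.succ 0) (fun j => A 0 j.succ)
      (A.submatrix Fin.succ Fin.succ) := by
  ext i j
  cases i using Fin.cases <;> cases j using Fin.cases <;> rfl

theorem border_map {S : Type*} (f : R → S) :
    (border a c r M).map f = border (f a) (f ∘ c) (f ∘ r) (M.map f) := by
  ext i j
  cases i using Fin.cases <;> cases j using Fin.cases <;> rfl

theorem border_eq_one_iff [Zero R] [One R] :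
    border a c r M = 1 ↔ a = 1 ∧ c = 0 ∧ r = 0 ∧ M = 1 := by
  constructor
  · intro h
    refine ⟨congr_fun₂ h 0 0, funext fun i => congr_fun₂ h i.succ 0,
      funext fun j => congr_fun₂ h 0 j.succ, ext fun i j => ?_⟩
    simpa [one_apply, Fin.succ_inj] using congr_fun₂ h i.succ j.succ
  · rintro ⟨rfl, rfl, rfl, rfl⟩
    ext i j
    cases i using Fin.cases <;> cases j using Fin.cases <;>
      simp [one_apply, Fin.succ_inj, (Fin.succ_ne_zero _).symm]

theorem border_mul_border [NonUnitalNonAssocSemiring R] (a' : R) (c' r' : Fin n → R)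
    (M' : Matrix (Fin n) (Fin n) R) :
    border a c r M * border a' c' r' M' =
      border (a * a' + r ⬝ᵥ c') (fun i => c i * a' + (M *ᵥ c') i)
        (fun j => a * r' j + (r ᵥ* M') j) (vecMulVec c r' + M * M') := by
  ext i j
  cases i using Fin.cases <;> cases j using Fin.cases <;>
    simp [mul_apply, Fin.sum_univ_succ, dotProduct, mulVec, vecMul, vecMulVec]

theorem IsLowerUnitriangular.border [Zero R] [One R] {N : Matrix (Fin n) (Fin n) R}
    (hN : N.IsLowerUnitriangular) (c : Fin n → R) : (border 1 c 0 N).IsLowerUnitriangular := by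
  refine ⟨fun i j hij => ?_, fun i => ?_⟩
  · cases i using Fin.cases <;> cases j using Fin.cases
    · exact absurd hij (lt_irrefl _)
    · rfl
    · exact absurd hij (Fin.succ_pos _).not_gt
    · exact hN.1 (Fin.succ_lt_succ_iff.1 hij)
  · cases i using Fin.cases
    · rfl
    · exact hN.2 _

theorem IsUpperUnitriangular.border [Zero R] [One R] {U : Matrix (Fin n) (Fin n) R}
    (hU : U.IsUpperUnitriangular) (r : Fin n → R) : (border 1 0 r U).IsUpperUnitriangular := by
  refine ⟨fun i j hij => ?_, fun i => ?_⟩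
  · cases i using Fin.cases <;> cases j using Fin.cases
    · exact absurd hij (lt_irrefl _)
    · exact absurd hij (Fin.succ_pos _).not_gt
    · rfl
    · exact hU.1 (Fin.succ_lt_succ_iff.1 hij)
  · cases i using Fin.cases
    · rfl
    · exact hU.2 _

theorem IsDiag.border [Zero R] {H : Matrix (Fin n) (Fin n) R} (hH : H.IsDiag) (a : R) :
    (border a 0 0 H).IsDiag := by
  intro i j hij
  cases i using Fin.cases <;> cases j using Fin.cases
  · exact absurd rfl hij
  · rfl
  · rfl
  · exact hH (fun h => hij (congrArg Fin.succ h))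

theorem border_mul_border_mul_border [CommSemiring R] {b : R}
    (hab : b * a = 1) (c r : Fin n → R) (N H U : Matrix (Fin n) (Fin n) R) :
    border 1 (b • c) 0 N * border a 0 0 H * border 1 0 (b • r) U =
      border a c r (vecMulVec c (b • r) + N * H * U) := by
  have hba : ∀ x, b * x * a = x := fun x => by rw [mul_right_comm, hab, one_mul]
  have hab' : ∀ x, a * (b * x) = x := fun x => by rw [← mul_assoc, mul_comm a, hab, one_mul]
  simp [border_mul_border, hba, hab', ← Pi.zero_def]

end Border

section Congruence

variable {R : Type*} [CommRing R] {I : Ideal R}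

theorem map_mk_eq_one_iff {ι : Type*} [DecidableEq ι] {A : Matrix ι ι R} :
    A.map (Ideal.Quotient.mk I) = 1 ↔ ∀ i j, A i j - (1 : Matrix ι ι R) i j ∈ I := by
  rw [← Matrix.map_one (Ideal.Quotient.mk I) (map_zero _) (map_one _), ← Matrix.ext_iff]
  simp only [map_apply, Ideal.Quotient.eq]

theorem exists_ldu_of_map_mk_eq_one (hI : I ≤ (⊥ : Ideal R).jacobson) {n : ℕ}
    (A : Matrix (Fin n) (Fin n) R) (hA : A.map (Ideal.Quotient.mk I) = 1) :
    ∃ N H U : Matrix (Fin n) (Fin n) R,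
      N.IsLowerUnitriangular ∧ N.map (Ideal.Quotient.mk I) = 1 ∧
      H.IsDiag ∧ H.map (Ideal.Quotient.mk I) = 1 ∧
      U.IsUpperUnitriangular ∧ U.map (Ideal.Quotient.mk I) = 1 ∧
      A = N * H * U := by
  induction n with
  | zero =>
    exact ⟨1, 1, 1, isLowerUnitriangular_one, Subsingleton.elim _ _, isDiag_one,
      Subsingleton.elim _ _, isUpperUnitriangular_one, Subsingleton.elim _ _,
      Subsingleton.elim _ _⟩
  | succ n ih =>
    obtain ⟨a, c, r, M, rfl⟩ : ∃ a c r M, A = border a c r M := ⟨_, _, _, _, eq_border A⟩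
    simp only [border_map, border_eq_one_iff, funext_iff, Function.comp_apply,
      Pi.zero_apply] at hA
    obtain ⟨ha, hc, hr, hM⟩ := hA
    obtain ⟨b, hba⟩ := (Ideal.isUnit_of_sub_one_mem_jacobson_bot a
      (hI (Ideal.Quotient.eq.1 (ha.trans (map_one _).symm)))).exists_left_inv
    have hS : (M - vecMulVec c (b • r)).map (Ideal.Quotient.mk I) = 1 := by
      ext i j
      simpa [vecMulVec, hc i] using congr_fun₂ hM i j
    obtain ⟨N, H, U, hN, hNI, hH, hHI, hU, hUI, hNHU⟩ := ih _ hS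
    refine ⟨border 1 (b • c) 0 N, border a 0 0 H, border 1 0 (b • r) U, hN.border _, ?_,
      hH.border a, ?_, hU.border _, ?_, ?_⟩
    · simp [border_map, border_eq_one_iff, hNI, funext_iff, hc]
    · simp [border_map, border_eq_one_iff, hHI, ha]
    · simp [border_map, border_eq_one_iff, hUI, funext_iff, hr]
    · rw [border_mul_border_mul_border hba, ← hNHU, add_sub_cancel]

end Congruence

end Matrix

theorem congruence_LDU_general (p r m d : ℕ) (hm : 1 ≤ m)
    (γ : Matrix.SpecialLinearGroup (Fin d) (ZMod (p ^ r)))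
    (hγ : ∀ i j, (p : ZMod (p ^ r)) ^ m ∣
      ((γ : Matrix (Fin d) (Fin d) (ZMod (p ^ r))) i j
        - (1 : Matrix (Fin d) (Fin d) (ZMod (p ^ r))) i j)) :
    ∃ N H U : Matrix (Fin d) (Fin d) (ZMod (p ^ r)),
      (∀ i, N i i = 1) ∧ (∀ i j : Fin d, i < j → N i j = 0) ∧
      (∀ i j : Fin d, j < i → (p : ZMod (p ^ r)) ^ m ∣ N i j) ∧
      (∀ i j : Fin d, i ≠ j → H i j = 0) ∧
      (∀ i, (p : ZMod (p ^ r)) ^ m ∣ (H i i - 1)) ∧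
      (∀ i, U i i = 1) ∧ (∀ i j : Fin d, j < i → U i j = 0) ∧
      (∀ i j : Fin d, i < j → (p : ZMod (p ^ r)) ^ m ∣ U i j) ∧
      (γ : Matrix (Fin d) (Fin d) (ZMod (p ^ r))) = N * H * U := by
  have hp : IsNilpotent (p : ZMod (p ^ r)) := ⟨r, by rw [← Nat.cast_pow, ZMod.natCast_self]⟩
  have hI : Ideal.span {(p : ZMod (p ^ r)) ^ m} ≤ (⊥ : Ideal (ZMod (p ^ r))).jacobson :=
    (Ideal.span_singleton_le_iff_mem _).2
      (Ideal.radical_le_jacobson (mem_nilradical.2 (hp.pow_of_pos (by omega))))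
  obtain ⟨N, H, U, hN, hNI, hH, hHI, hU, hUI, hγNHU⟩ := exists_ldu_of_map_mk_eq_one hI _
    (map_mk_eq_one_iff.2 fun i j => Ideal.mem_span_singleton.2 (hγ i j))
  simp only [map_mk_eq_one_iff, Ideal.mem_span_singleton] at hNI hHI hUI
  refine ⟨N, H, U, hN.2, fun i j hij => hN.1 hij, fun i j hij => ?_, fun i j hij => hH hij,
    fun i => by simpa using hHI i i, hU.2, fun i j hij => hU.1 hij, fun i j hij => ?_, hγNHU⟩
  · simpa [one_apply_ne hij.ne'] using hNI i j
  · simpa [one_apply_ne hij.ne] using hUI i j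

/-- LDU decomposition of elements of the principal congruence
subgroup of level `p^m` in `SL_d(ℤ/p^rℤ)`. -/
theorem congruence_LDU (p r m d : ℕ) (hp : p.Prime) (hr : 1 ≤ r) (hm : 1 ≤ m)
    (γ : Matrix.SpecialLinearGroup (Fin d) (ZMod (p ^ r)))
    (hdiag : ∀ i, IsUnit ((γ : Matrix (Fin d) (Fin d) (ZMod (p ^ r))) i i))
    (hγ : ∀ i j, (p : ZMod (p ^ r)) ^ m ∣
      ((γ : Matrix (Fin d) (Fin d) (ZMod (p ^ r))) i j
        - (1 : Matrix (Fin d) (Fin d) (ZMod (p ^ r))) i j)) :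
    ∃ N H U : Matrix (Fin d) (Fin d) (ZMod (p ^ r)),
      (∀ i, N i i = 1) ∧ (∀ i j : Fin d, i < j → N i j = 0) ∧
      (∀ i j : Fin d, j < i → (p : ZMod (p ^ r)) ^ m ∣ N i j) ∧
      (∀ i j : Fin d, i ≠ j → H i j = 0) ∧
      (∀ i, (p : ZMod (p ^ r)) ^ m ∣ (H i i - 1)) ∧
      (∀ i, U i i = 1) ∧ (∀ i j : Fin d, j < i → U i j = 0) ∧
      (∀ i j : Fin d, i < j → (p : ZMod (p ^ r)) ^ m ∣ U i j) ∧
      (γ : Matrix (Fin d) (Fin d) (ZMod (p ^ r))) = N * H * U :=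
  congruence_LDU_general p r m d hm γ hγ
end
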